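/- Let n ∈ ℕ, 0 < r_j < ∞, 1 ≤ p_j < ∞, 1 ≤ θ_j ≤ ∞ for j = 1,…,n; let 0 < δ ≤ (1/2)min_j{β_j r_j} with β_j > 0 defined as in the context; let φ_j be positive, strictly increasing, continuously differentiable functions on (0,∞) such that φ_j(t)t^{−r_j+δ} increases and φ_j(t)t^{−r_j−δ} decreases; and let σ(t) = inf{max_{1≤j≤n} t^{−1/p_j} φ_j(δ_j) : δ_j > 0, ∏_j δ_j = t}. Then for each fixed t > 0 the infimum defining σ(t) is attained, and for each j there is a unique δ_j(t) > 0 with σ(t) = t^{−1/p_j} φ_j(δ_j(t)); moreover the resulting functions σ and δ_j are continuously differentiable on (0,∞) and satisfy, for all t > 0, (r/n − 1/p − δ)/t ≤ σ'(t)/σ(t) ≤ (r/n − 1/p + δ)/t and (β_j r_j − δ)/((r_j + δ) t) ≤ δ_j'(t)/δ_j(t) ≤ (β_j r_j + δ)/((r_j − δ) t). -/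

import Mathlib

open MeasureTheory Set
open scoped ENNReal NNReal BigOperators

noncomputable section

/-- The measure `du/u` on `(0,∞)`. -/
def muLog : Measure ℝ :=
  (volume.restrict (Set.Ioi (0:ℝ))).withDensity fun u => ENNReal.ofReal u⁻¹

/-- The `𝓛^θ` norm of an `ℝ≥0∞`-valued function on `(0,∞)` (with respect to `du/u`),
for `θ ∈ [1,∞]`; for `θ = ∞` it is the essential supremum. -/
def calLE (θ : ℝ≥0∞) (g : ℝ → ℝ≥0∞) : ℝ≥0∞ :=
  if θ = ∞ then essSup g muLog
  else (∫⁻ t, g t ^ θ.toReal ∂muLog) ^ (1 / θ.toReal)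

/-- The `𝓛^θ` norm of a real-valued function on `(0,∞)`. -/
def calL (θ : ℝ≥0∞) (g : ℝ → ℝ) : ℝ≥0∞ :=
  calLE θ fun t => ENNReal.ofReal |g t|

/-- The distribution function `λ_f(y) = |{x : |f x| > y}|`. -/
def distFn {n : ℕ} (f : (Fin n → ℝ) → ℝ) (y : ℝ) : ℝ≥0∞ :=
  volume {x | y < |f x|}

/-- `f ∈ S₀(ℝⁿ)`: measurable with finite distribution function for all `y > 0`. -/
def MemS0 {n : ℕ} (f : (Fin n → ℝ) → ℝ) : Prop :=
  Measurable f ∧ ∀ y : ℝ, 0 < y → distFn f y < ∞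

/-- The non-increasing rearrangement `f*`. -/
def rearr {n : ℕ} (f : (Fin n → ℝ) → ℝ) (t : ℝ) : ℝ :=
  sInf {y : ℝ | 0 ≤ y ∧ distFn f y ≤ ENNReal.ofReal t}

/-- The real-valued `L^p(ℝⁿ)` norm. -/
def lpR {n : ℕ} (p : ℝ) (f : (Fin n → ℝ) → ℝ) : ℝ :=
  (eLpNorm f (ENNReal.ofReal p) volume).toReal

/-- The difference of degree `k` in direction `j` with step `h`:
`Δ_j^k(h) f (x) = ∑ (-1)^{k-i} C(k,i) f(x + i h e_j)`. -/
def diffOp {n : ℕ} (j : Fin n) (k : ℕ) (h : ℝ) (f : (Fin n → ℝ) → ℝ) :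
    (Fin n → ℝ) → ℝ :=
  fun x => ∑ i ∈ Finset.range (k + 1),
    (-1 : ℝ) ^ (k - i) * (k.choose i : ℝ) * f (x + ((i : ℝ) * h) • (Pi.single j 1 : Fin n → ℝ))

/-- The modulus of continuity `ω_j^k(f;δ)_p = sup_{0<h≤δ} ‖Δ_j^k(h) f‖_p`. -/
def modCont {n : ℕ} (j : Fin n) (k : ℕ) (p : ℝ) (f : (Fin n → ℝ) → ℝ) (δ : ℝ) : ℝ :=
  sSup ((fun h => lpR p (diffOp j k h f)) '' Set.Ioc 0 δ)

/-- The directional Besov seminorm `‖f‖_{b^r_{p,θ;j}}` with difference order `k`. -/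
def besov {n : ℕ} (j : Fin n) (k : ℕ) (r p : ℝ) (θ : ℝ≥0∞)
    (f : (Fin n → ℝ) → ℝ) : ℝ≥0∞ :=
  calL θ fun h => h ^ (-r) * lpR p (diffOp j k h f)

/-- The Lorentz quasinorm `‖f‖_{q,s} = ‖t^{1/q} f*(t)‖_{𝓛^s}`. -/
def lorentz {n : ℕ} (q : ℝ) (s : ℝ≥0∞) (f : (Fin n → ℝ) → ℝ) : ℝ≥0∞ :=
  calL s fun t => t ^ (1 / q) * rearr f t

/-- The norm in the sum space `L¹ + L^{p₀}`. -/
def sumNormE {n : ℕ} (p₀ : ℝ) (f : (Fin n → ℝ) → ℝ) : ℝ≥0∞ :=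
  ⨅ (g : (Fin n → ℝ) → ℝ) (h : (Fin n → ℝ) → ℝ) (_ : f = g + h),
    eLpNorm g 1 volume + eLpNorm h (ENNReal.ofReal p₀) volume

/-- The function `σ(t) = inf { max_j t^{-1/p_j} φ_j(δ_j) : δ_j > 0, ∏ δ_j = t }`. -/
def sigmaFn {n : ℕ} (pp : Fin n → ℝ) (φ : Fin n → ℝ → ℝ) (t : ℝ) : ℝ :=
  sInf {a : ℝ | ∃ d : Fin n → ℝ, (∀ j, 0 < d j) ∧ (∏ j, d j) = t ∧
    a = ⨆ j, t ^ (-(pp j)⁻¹) * φ j (d j)}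

/-!
In the coordinates `x = log t`, the function `L_j y = log (φ_j (exp y))` has slope between
`r_j - δ` and `r_j + δ`, so it is a C¹ diffeomorphism of `ℝ` with inverse `M_j`. The balance
`t^{-1/p_j} φ_j(δ_j) = σ` forces `log δ_j = M_j (x / p_j + log σ)`, and `∏ δ_j = t` becomes
`∑_j M_j (x / p_j + s) = x`, whose left side is strictly increasing in `s`; its unique root
`s = S x` is C¹ by the implicit function theorem, with `S' = (1 - ∑ m_j / p_j) / ∑ m_j` for
`m_j = M_j'`. The bounds `1/(r_j + δ) ≤ m_j ≤ 1/(r_j - δ)` together with `∑ β_j = 1` keep `S'`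
within `δ` of `r/n - 1/p`. Any other admissible `(δ_j)` with the same product has some `δ_j` at
least as large as the balanced one, so the balanced choice realises the infimum.
-/

open Real Filter Topology Function

section InverseFunction

variable {L : ℝ → ℝ} {a b : ℝ}

theorem surjective_of_le_deriv (hL : Differentiable ℝ L) (ha : 0 < a)
    (h : ∀ x, a ≤ deriv L x) : Surjective L := by
  have hslope := mul_sub_le_image_sub_of_le_deriv hL h
  refine hL.continuous.surjective ?_ ?_
  · refine tendsto_atTop_mono' _ ?_
      (tendsto_atTop_add_const_left _ (L 0) (tendsto_id.const_mul_atTop ha))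
    filter_upwards [eventually_ge_atTop 0] with x hx
    show L 0 + a * x ≤ L x
    linarith [hslope hx]
  · refine tendsto_atBot_mono' _ ?_
      (tendsto_atBot_add_const_left _ (L 0) (tendsto_id.const_mul_atBot ha))
    filter_upwards [eventually_le_atBot 0] with x hx
    show L x ≤ L 0 + a * x
    linarith [hslope hx]

theorem exists_rightInverse_of_deriv_mem_Icc (hL : ContDiff ℝ 1 L) (ha : 0 < a)
    (h : ∀ x, deriv L x ∈ Icc a b) :
    ∃ M m : ℝ → ℝ, (∀ y, L (M y) = y) ∧ (∀ y, HasDerivAt M (m y) y) ∧ Continuous m ∧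
      ∀ y, m y ∈ Icc b⁻¹ a⁻¹ := by
  have hdiff := hL.differentiable one_ne_zero
  have hpos : ∀ x, 0 < deriv L x := fun x => ha.trans_le (h x).1
  let e := (strictMono_of_deriv_pos hpos).orderIsoOfSurjective L
    (surjective_of_le_deriv hdiff ha fun x => (h x).1)
  refine ⟨e.symm, fun y => (deriv L (e.symm y))⁻¹, e.apply_symm_apply, fun y => ?_, ?_,
    fun y => ⟨inv_anti₀ (hpos _) (h _).2, inv_anti₀ ha (h _).1⟩⟩
  · exact .of_local_left_inverse e.symm.continuous.continuousAt (hdiff _).hasDerivAt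
      (hpos _).ne' (.of_forall e.apply_symm_apply)
  · exact ((hL.continuous_deriv le_rfl).comp e.symm.continuous).inv₀ fun y => (hpos _).ne'

end InverseFunction

theorem hasDerivAt_of_forall_apply_eq {f f₁ f₂ : ℝ → ℝ → ℝ} {S : ℝ → ℝ} {c a : ℝ}
    (hf₁ : ∀ x s, HasDerivAt (f · s) (f₁ x s) x) (hf₂ : ∀ x s, HasDerivAt (f x ·) (f₂ x s) s)
    (hc₁ : Continuous (uncurry f₁)) (hc₂ : Continuous (uncurry f₂)) (h₂ : f₂ a (S a) ≠ 0)
    (hinj : ∀ x, Injective (f x)) (hS : ∀ x, f x (S x) = c) :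
    HasDerivAt S (-f₁ a (S a) / f₂ a (S a)) a := by
  let D₁ : ℝ → ℝ → ℝ →L[ℝ] ℝ := fun x s => (1 : ℝ →L[ℝ] ℝ).smulRight (f₁ x s)
  let D₂ : ℝ → ℝ → ℝ →L[ℝ] ℝ := fun x s => (1 : ℝ →L[ℝ] ℝ).smulRight (f₂ x s)
  have hlin : Continuous fun c : ℝ => (1 : ℝ →L[ℝ] ℝ).smulRight c := by fun_prop
  have df₁ : ∀ᶠ v in 𝓝 (a, S a), HasFDerivAt (f · v.2) (D₁ v.1 v.2) v.1 :=
    .of_forall fun v => (hf₁ v.1 v.2).hasFDerivAt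
  have df₂ : ∀ᶠ v in 𝓝 (a, S a), HasFDerivAt (f v.1 ·) (D₂ v.1 v.2) v.2 :=
    .of_forall fun v => (hf₂ v.1 v.2).hasFDerivAt
  have cf₁ : ContinuousAt ↿D₁ (a, S a) := (hlin.comp hc₁).continuousAt
  have cf₂ : ContinuousAt ↿D₂ (a, S a) := (hlin.comp hc₂).continuousAt
  have if₂ : (D₂ a (S a)).IsInvertible :=
    ⟨ContinuousLinearEquiv.unitsEquivAut ℝ (Units.mk0 _ h₂), by ext; simp [D₂]⟩
  -- the local implicit function agrees with `S` because each `f x` is injective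
  have hψ : implicitFunctionOfBivariate df₁ df₂ cf₁ cf₂ if₂ =ᶠ[𝓝 a] S :=
    (eventually_apply_implicitFunctionOfBivariate df₁ df₂ cf₁ cf₂ if₂).mono fun x hx =>
      hinj x (hx.trans ((hS a).trans (hS x).symm))
  refine ((hasStrictFDerivAt_implicitFunctionOfBivariate df₁ df₂ cf₁ cf₂ if₂).hasFDerivAt
    |>.hasDerivAt.congr_of_eventuallyEq hψ.symm).congr_deriv ?_
  change -(D₂ a (S a)).inverse (D₁ a (S a) 1) = _
  rw [neg_div, neg_inj, if₂.inverse_apply_eq]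
  simp [D₁, D₂, h₂]

section LogCoordinates

variable {φ : ℝ → ℝ} {ρ δ : ℝ}

theorem contDiff_log_comp_exp (hpos : ∀ t, 0 < t → 0 < φ t) (hφ : ContDiffOn ℝ 1 φ (Ioi 0)) :
    ContDiff ℝ 1 fun y => log (φ (exp y)) :=
  contDiff_iff_contDiffAt.2 fun y =>
    ((hφ.contDiffAt (Ioi_mem_nhds (exp_pos y))).comp y contDiff_exp.contDiffAt).log
      (hpos _ (exp_pos y)).ne'

theorem deriv_log_comp_exp_mem_Icc (hpos : ∀ t, 0 < t → 0 < φ t)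
    (hup : MonotoneOn (fun t => φ t * t ^ (-ρ + δ)) (Ioi 0))
    (hdown : AntitoneOn (fun t => φ t * t ^ (-ρ - δ)) (Ioi 0)) {y : ℝ}
    (hL : DifferentiableAt ℝ (fun y => log (φ (exp y))) y) :
    deriv (fun y => log (φ (exp y))) y ∈ Icc (ρ - δ) (ρ + δ) := by
  have hlog : ∀ c x, log (φ (exp x) * exp x ^ c) = log (φ (exp x)) + c * x := fun c x => by
    rw [log_mul (hpos _ (exp_pos x)).ne' (rpow_pos_of_pos (exp_pos x) c).ne',
      log_rpow (exp_pos x), log_exp]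
  have hderiv : ∀ c, deriv (fun x => log (φ (exp x)) + c * x) y =
      deriv (fun y => log (φ (exp y))) y + c := fun c =>
    (hL.hasDerivAt.add (((hasDerivAt_id' y).const_mul c).congr_deriv (mul_one c))).deriv
  have hmono : Monotone fun x => log (φ (exp x)) + (-ρ + δ) * x := fun x x' hx => by
    simpa only [hlog] using
      log_le_log (mul_pos (hpos _ (exp_pos x)) (rpow_pos_of_pos (exp_pos x) _))
        (hup (exp_pos x) (exp_pos x') (exp_le_exp.2 hx))
  have hanti : Antitone fun x => log (φ (exp x)) + (-ρ - δ) * x := fun x x' hx => by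
    simpa only [hlog] using
      log_le_log (mul_pos (hpos _ (exp_pos x')) (rpow_pos_of_pos (exp_pos x') _))
        (hdown (exp_pos x) (exp_pos x') (exp_le_exp.2 hx))
  have h₁ := hmono.deriv_nonneg (x := y)
  have h₂ := hanti.deriv_nonpos (x := y)
  rw [hderiv] at h₁ h₂
  constructor <;> linarith

theorem exists_rightInverse_log_comp_exp (hpos : ∀ t, 0 < t → 0 < φ t)
    (hφ : ContDiffOn ℝ 1 φ (Ioi 0))
    (hup : MonotoneOn (fun t => φ t * t ^ (-ρ + δ)) (Ioi 0))
    (hdown : AntitoneOn (fun t => φ t * t ^ (-ρ - δ)) (Ioi 0)) (hδρ : δ < ρ) :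
    ∃ M m : ℝ → ℝ, (∀ y, φ (exp (M y)) = exp y) ∧ (∀ y, HasDerivAt M (m y) y) ∧
      Continuous m ∧ ∀ y, m y ∈ Icc (ρ + δ)⁻¹ (ρ - δ)⁻¹ := by
  have hL := contDiff_log_comp_exp hpos hφ
  obtain ⟨M, m, hLM, hM, hm, hmb⟩ := exists_rightInverse_of_deriv_mem_Icc hL (sub_pos.2 hδρ)
    fun y => deriv_log_comp_exp_mem_Icc hpos hup hdown (hL.differentiable one_ne_zero y)
  refine ⟨M, m, fun y => ?_, hM, hm, hmb⟩
  rw [← exp_log (hpos _ (exp_pos (M y))), hLM]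

end LogCoordinates

theorem hasDerivAt_exp_comp_log {g : ℝ → ℝ} {g' t : ℝ} (hg : HasDerivAt g g' (log t))
    (ht : 0 < t) : HasDerivAt (fun t => exp (g (log t))) (exp (g (log t)) * (g' / t)) t := by
  simpa [div_eq_mul_inv] using (hg.comp t (hasDerivAt_log ht.ne')).exp

theorem logDeriv_exp_comp_log_bounds {g : ℝ → ℝ} {g' lo hi t : ℝ}
    (hg : HasDerivAt g g' (log t)) (ht : 0 < t) (hg' : g' ∈ Icc lo hi) :
    DifferentiableAt ℝ (fun t => exp (g (log t))) t ∧
      lo / t ≤ deriv (fun t => exp (g (log t))) t / exp (g (log t)) ∧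
      deriv (fun t => exp (g (log t))) t / exp (g (log t)) ≤ hi / t := by
  have h := hasDerivAt_exp_comp_log hg ht
  rw [h.deriv, mul_div_cancel_left₀ _ (exp_pos _).ne']
  exact ⟨h.differentiableAt, by gcongr; exact hg'.1, by gcongr; exact hg'.2⟩

theorem contDiffOn_exp_comp_log {g : ℝ → ℝ} (hg : ContDiff ℝ 1 g) :
    ContDiffOn ℝ 1 (fun t => exp (g (log t))) (Ioi 0) :=
  contDiff_exp.comp_contDiffOn (hg.comp_contDiffOn
    (contDiffOn_log.mono fun _ ht => (mem_Ioi.1 ht).ne'))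

section Balance

variable {ι : Type*} [Fintype ι] [Nonempty ι]

theorem exists_sum_apply_mul_add_eq {M m : ι → ℝ → ℝ} {a : ι → ℝ} (q : ι → ℝ)
    (hM : ∀ j y, HasDerivAt (M j) (m j y) y) (hm : ∀ j, Continuous (m j))
    (ha : ∀ j, 0 < a j) (hma : ∀ j y, a j ≤ m j y) :
    ∃ S : ℝ → ℝ, ContDiff ℝ 1 S ∧ ∀ x, ∑ j, M j (q j * x + S x) = x ∧
      HasDerivAt S ((1 - ∑ j, m j (q j * x + S x) * q j) / ∑ j, m j (q j * x + S x)) x := by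
  let f : ℝ → ℝ → ℝ := fun x s => ∑ j, M j (q j * x + s) - x
  let f₁ : ℝ → ℝ → ℝ := fun x s => ∑ j, m j (q j * x + s) * q j - 1
  let f₂ : ℝ → ℝ → ℝ := fun x s => ∑ j, m j (q j * x + s)
  have hf₁ : ∀ x s, HasDerivAt (f · s) (f₁ x s) x := fun x s =>
    (HasDerivAt.fun_sum fun j _ => (hM j _).comp x
      ((((hasDerivAt_id' x).const_mul (q j)).add_const s).congr_deriv (mul_one _))).sub
      (hasDerivAt_id' x)
  have hf₂ : ∀ x s, HasDerivAt (f x ·) (f₂ x s) s := fun x s =>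
    ((HasDerivAt.fun_sum (u := Finset.univ) fun j _ =>
      (hM j _).comp s ((hasDerivAt_id' s).const_add (q j * x))).sub_const x).congr_deriv
      (by simp [f₂])
  have hc₁ : Continuous (uncurry f₁) := by
    have := hm
    unfold f₁ uncurry
    fun_prop
  have hc₂ : Continuous (uncurry f₂) := by
    have := hm
    unfold f₂ uncurry
    fun_prop
  have hsum_pos : 0 < ∑ j, a j := Finset.sum_pos (fun j _ => ha j) Finset.univ_nonempty
  have hf₂_pos : ∀ x s, ∑ j, a j ≤ f₂ x s := fun x s => Finset.sum_le_sum fun j _ => hma j _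
  have hderiv : ∀ x s, deriv (f x) s = f₂ x s := fun x s => (hf₂ x s).deriv
  have hsurj : ∀ x, Surjective (f x) := fun x =>
    surjective_of_le_deriv (fun s => (hf₂ x s).differentiableAt) hsum_pos
      fun s => (hderiv x s).symm ▸ hf₂_pos x s
  have hinj : ∀ x, Injective (f x) := fun x => (strictMono_of_deriv_pos fun s =>
    (hderiv x s).symm ▸ hsum_pos.trans_le (hf₂_pos x s)).injective
  let S : ℝ → ℝ := fun x => surjInv (hsurj x) 0
  have hfS : ∀ x, f x (S x) = 0 := fun x => surjInv_eq (hsurj x) 0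
  have hS : ∀ x, HasDerivAt S (-f₁ x (S x) / f₂ x (S x)) x := fun x =>
    hasDerivAt_of_forall_apply_eq hf₁ hf₂ hc₁ hc₂ (hsum_pos.trans_le (hf₂_pos x _)).ne' hinj hfS
  have hScont : Continuous S := continuous_iff_continuousAt.2 fun x => (hS x).continuousAt
  have hS' : Continuous fun x => -f₁ x (S x) / f₂ x (S x) :=
    (hc₁.comp (continuous_id.prodMk hScont)).neg.div (hc₂.comp (continuous_id.prodMk hScont))
      fun x => (hsum_pos.trans_le (hf₂_pos x _)).ne'
  refine ⟨S, contDiff_one_iff_deriv.2 ⟨fun x => (hS x).differentiableAt, ?_⟩, fun x =>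
    ⟨sub_eq_zero.1 (hfS x), (hS x).congr_deriv (by simp only [f₁, f₂]; ring)⟩⟩
  rwa [show deriv S = _ from funext fun x => (hS x).deriv]

theorem one_sub_sum_mul_div_sum_mem_Icc {β r q m : ι → ℝ} {c δ : ℝ} (hβ1 : ∀ j, β j ≤ 1)
    (hβsum : ∑ j, β j = 1) (hδ : 0 ≤ δ) (hδβ : ∀ j, δ ≤ β j * r j) (hδr : ∀ j, δ < r j)
    (hq : ∀ j, q j + c = β j * r j) (hm : ∀ j, m j ∈ Icc (r j + δ)⁻¹ (r j - δ)⁻¹) :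
    (1 - ∑ j, m j * q j) / ∑ j, m j ∈ Icc (c - δ) (c + δ) := by
  have hr : ∀ j, 0 < r j - δ := fun j => sub_pos.2 (hδr j)
  have hm₀ : ∀ j, 0 < m j := fun j => (inv_pos.2 (by linarith [hr j])).trans_le (hm j).1
  have hpos : 0 < ∑ j, m j := Finset.sum_pos (fun j _ => hm₀ j) Finset.univ_nonempty
  -- both termwise bounds reduce to `β j * δ ≤ δ`
  have hlo : ∀ j, m j * (β j * r j - δ) ≤ β j := fun j => by
    calc m j * (β j * r j - δ) ≤ (r j - δ)⁻¹ * (β j * r j - δ) :=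
          mul_le_mul_of_nonneg_right (hm j).2 (by linarith [hδβ j])
      _ ≤ β j := by
          rw [← div_eq_inv_mul, div_le_iff₀ (hr j)]
          nlinarith [hβ1 j]
  have hhi : ∀ j, β j ≤ m j * (β j * r j + δ) := fun j => by
    calc β j ≤ (r j + δ)⁻¹ * (β j * r j + δ) := by
          rw [← div_eq_inv_mul, le_div_iff₀ (by linarith [hr j])]
          nlinarith [hβ1 j]
      _ ≤ m j * (β j * r j + δ) := mul_le_mul_of_nonneg_right (hm j).1 (by linarith [hδβ j])
  have hexpand : ∀ e, ∑ j, m j * (β j * r j + e) = ∑ j, m j * q j + (c + e) * ∑ j, m j :=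
    fun e => by
      simp only [← hq, Finset.mul_sum, ← Finset.sum_add_distrib]
      exact Finset.sum_congr rfl fun j _ => by ring
  have hsum_lo := Finset.sum_le_sum fun j (_ : j ∈ Finset.univ) => hlo j
  have hsum_hi := Finset.sum_le_sum fun j (_ : j ∈ Finset.univ) => hhi j
  simp only [sub_eq_add_neg (β _ * r _), hexpand, hβsum] at hsum_lo hsum_hi
  rw [mem_Icc, le_div_iff₀ hpos, div_le_iff₀ hpos]
  constructor <;> linarith

theorem exists_balanced {pp rr β : ι → ℝ} {φ : ι → ℝ → ℝ} {c δ : ℝ} (hβ1 : ∀ j, β j ≤ 1)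
    (hβsum : ∑ j, β j = 1) (hδ : 0 ≤ δ) (hδβ : ∀ j, δ ≤ β j * rr j) (hδr : ∀ j, δ < rr j)
    (hq : ∀ j, (pp j)⁻¹ + c = β j * rr j)
    (hφpos : ∀ j t, 0 < t → 0 < φ j t) (hφC1 : ∀ j, ContDiffOn ℝ 1 (φ j) (Ioi 0))
    (hφup : ∀ j, MonotoneOn (fun t => φ j t * t ^ (-(rr j) + δ)) (Ioi 0))
    (hφdown : ∀ j, AntitoneOn (fun t => φ j t * t ^ (-(rr j) - δ)) (Ioi 0)) :
    ∃ (D : ι → ℝ → ℝ) (σ : ℝ → ℝ), (∀ j t, 0 < D j t) ∧ (∀ t, 0 < t → ∏ j, D j t = t) ∧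
      (∀ j t, 0 < t → t ^ (-(pp j)⁻¹) * φ j (D j t) = σ t) ∧
      (∀ j, ContDiffOn ℝ 1 (D j) (Ioi 0)) ∧ ContDiffOn ℝ 1 σ (Ioi 0) ∧
      (∀ t, 0 < t → DifferentiableAt ℝ σ t ∧
        (c - δ) / t ≤ deriv σ t / σ t ∧ deriv σ t / σ t ≤ (c + δ) / t) ∧
      (∀ j t, 0 < t → DifferentiableAt ℝ (D j) t ∧
        (β j * rr j - δ) / ((rr j + δ) * t) ≤ deriv (D j) t / D j t ∧
        deriv (D j) t / D j t ≤ (β j * rr j + δ) / ((rr j - δ) * t)) := by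
  choose M m hφM hM hm hmb using fun j =>
    exists_rightInverse_log_comp_exp (hφpos j) (hφC1 j) (hφup j) (hφdown j) (hδr j)
  obtain ⟨S, hS, hSeq⟩ := exists_sum_apply_mul_add_eq (fun j => (pp j)⁻¹) hM hm
    (fun j => inv_pos.2 (by linarith [hδr j])) fun j y => (hmb j y).1
  have hdS := fun x => one_sub_sum_mul_div_sum_mem_Icc hβ1 hβsum hδ hδβ hδr hq
    fun j => hmb j ((pp j)⁻¹ * x + S x)
  have hMC1 : ∀ j, ContDiff ℝ 1 (M j) := fun j => contDiff_one_iff_deriv.2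
    ⟨fun y => (hM j y).differentiableAt, by rw [funext fun y => (hM j y).deriv]; exact hm j⟩
  refine ⟨fun j t => exp (M j ((pp j)⁻¹ * log t + S (log t))), fun t => exp (S (log t)),
    fun j t => exp_pos _, fun t ht => ?_, fun j t ht => ?_,
    fun j => contDiffOn_exp_comp_log ((hMC1 j).comp ((contDiff_const.mul contDiff_id).add hS)),
    contDiffOn_exp_comp_log hS,
    fun t ht => logDeriv_exp_comp_log_bounds (hSeq _).2 ht (hdS _), fun j t ht => ?_⟩
  · rw [← exp_sum, (hSeq _).1, exp_log ht]
  · rw [hφM, rpow_def_of_pos ht, ← exp_add]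
    ring_nf
  · set y := (pp j)⁻¹ * log t + S (log t)
    set dS := (1 - ∑ i, m i ((pp i)⁻¹ * log t + S (log t)) * (pp i)⁻¹) /
      ∑ i, m i ((pp i)⁻¹ * log t + S (log t))
    have hg : HasDerivAt (fun x => M j ((pp j)⁻¹ * x + S x)) (m j y * ((pp j)⁻¹ + dS)) (log t) :=
      ((hM j _).comp (log t) (((hasDerivAt_id' _).const_mul _).add (hSeq _).2)).congr_deriv
        (by rw [mul_one]; rfl)
    obtain ⟨hm₁, hm₂⟩ := hmb j y
    obtain ⟨hd₁, hd₂⟩ := hdS (log t)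
    have hm₀ : 0 < m j y := (inv_pos.2 (by linarith [hδr j])).trans_le hm₁
    rw [← div_div, ← div_div]
    refine logDeriv_exp_comp_log_bounds hg ht ⟨?_, ?_⟩ <;> rw [div_eq_inv_mul]
    · exact mul_le_mul hm₁ (by linarith [hq j]) (by linarith [hδβ j]) hm₀.le
    · exact mul_le_mul hm₂ (by linarith [hq j]) (by linarith [hδβ j, hq j])
        (inv_pos.2 (sub_pos.2 (hδr j))).le

end Balance

theorem sigmaFn_eq_of_forall_eq {n : ℕ} [Nonempty (Fin n)] {pp : Fin n → ℝ}
    {φ : Fin n → ℝ → ℝ} (hφ : ∀ j, StrictMonoOn (φ j) (Ioi 0)) {t s : ℝ} {d : Fin n → ℝ}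
    (hd : ∀ j, 0 < d j) (hprod : ∏ j, d j = t) (hbal : ∀ j, t ^ (-(pp j)⁻¹) * φ j (d j) = s) :
    sigmaFn pp φ t = s := by
  have ht : 0 < t := hprod ▸ Finset.prod_pos fun j _ => hd j
  refine IsLeast.csInf_eq ⟨⟨d, hd, hprod, by simp only [hbal, ciSup_const]⟩, ?_⟩
  rintro _ ⟨d', hd', hprod', rfl⟩
  by_contra! hlt
  have hlt' : ∀ j, d' j < d j := fun j => by
    have := (le_ciSup (Finite.bddAbove_range _) j).trans_lt hlt
    rw [← hbal j, mul_lt_mul_iff_right₀ (rpow_pos_of_pos ht _)] at this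
    exact ((hφ j).lt_iff_lt (hd' j) (hd j)).1 this
  exact (Finset.prod_lt_prod_of_nonempty (fun j _ => hd' j) (fun j _ => hlt' j)
    Finset.univ_nonempty).ne (hprod'.trans hprod.symm)

theorem sum_beta_eq_one {n : ℕ} (hn : 0 < n) {rr pp β : Fin n → ℝ} {r p : ℝ}
    (hrr : ∀ j, 0 < rr j) (hrdef : r = (n : ℝ) / ∑ j, (rr j)⁻¹)
    (hpdef : p = ((n : ℝ) / r) / ∑ j, (pp j * rr j)⁻¹)
    (hβdef : ∀ j, β j = (rr j)⁻¹ * (r / n + (pp j)⁻¹ - p⁻¹)) : ∑ j, β j = 1 := by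
  have : Nonempty (Fin n) := ⟨⟨0, hn⟩⟩
  have hR : 0 < ∑ j, (rr j)⁻¹ :=
    Finset.sum_pos (fun j _ => inv_pos.2 (hrr j)) Finset.univ_nonempty
  have hn' : (n : ℝ) ≠ 0 := by positivity
  have h₁ : r / n * ∑ j, (rr j)⁻¹ = 1 := by
    rw [hrdef, div_right_comm, div_self hn', one_div, inv_mul_cancel₀ hR.ne']
  have h₂ : p⁻¹ * ∑ j, (rr j)⁻¹ = ∑ j, (pp j * rr j)⁻¹ := by
    rw [hpdef, hrdef, div_div_cancel₀ hn', inv_div, div_mul_cancel₀ _ hR.ne']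
  calc ∑ j, β j = ∑ j, (r / n * (rr j)⁻¹ + (pp j * rr j)⁻¹ - p⁻¹ * (rr j)⁻¹) :=
        Finset.sum_congr rfl fun j _ => by rw [hβdef, mul_inv]; ring
    _ = 1 := by
        rw [Finset.sum_sub_distrib, Finset.sum_add_distrib, ← Finset.mul_sum, ← Finset.mul_sum,
          h₁, h₂, add_sub_cancel_right]

theorem stmt17_general (n : ℕ) (hn : 0 < n) (rr pp : Fin n → ℝ)
    (hrr : ∀ j, 0 < rr j)
    (r p : ℝ) (β : Fin n → ℝ)
    (hrdef : r = (n : ℝ) / ∑ j, (rr j)⁻¹)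
    (hpdef : p = ((n : ℝ) / r) / ∑ j, (pp j * rr j)⁻¹)
    (hβdef : ∀ j, β j = (rr j)⁻¹ * (r / n + (pp j)⁻¹ - p⁻¹))
    (hβ : ∀ j, 0 < β j)
    (δ : ℝ) (hδ : 0 < δ) (hδ' : δ ≤ (1 / 2) * ⨅ j, β j * rr j)
    (φ : Fin n → ℝ → ℝ)
    (hφpos : ∀ j t, 0 < t → 0 < φ j t)
    (hφmono : ∀ j, StrictMonoOn (φ j) (Set.Ioi 0))
    (hφC1 : ∀ j, ContDiffOn ℝ 1 (φ j) (Set.Ioi 0))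
    (hφup : ∀ j, MonotoneOn (fun t => φ j t * t ^ (-(rr j) + δ)) (Set.Ioi 0))
    (hφdown : ∀ j, AntitoneOn (fun t => φ j t * t ^ (-(rr j) - δ)) (Set.Ioi 0)) :
    (∀ t, 0 < t → ∃ d : Fin n → ℝ, (∀ j, 0 < d j) ∧ (∏ j, d j) = t ∧
      sigmaFn pp φ t = ⨆ j, t ^ (-(pp j)⁻¹) * φ j (d j)) ∧
    (∀ t, 0 < t → ∀ j, ∃! dj : ℝ, 0 < dj ∧ sigmaFn pp φ t = t ^ (-(pp j)⁻¹) * φ j dj) ∧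
    ∃ δfun : Fin n → ℝ → ℝ,
      (∀ j t, 0 < t → 0 < δfun j t) ∧
      (∀ j, ContDiffOn ℝ 1 (δfun j) (Set.Ioi 0)) ∧
      ContDiffOn ℝ 1 (sigmaFn pp φ) (Set.Ioi 0) ∧
      (∀ t, 0 < t → (∏ j, δfun j t) = t) ∧
      (∀ j t, 0 < t → sigmaFn pp φ t = t ^ (-(pp j)⁻¹) * φ j (δfun j t)) ∧
      (∀ t, 0 < t → DifferentiableAt ℝ (sigmaFn pp φ) t ∧
        (r / n - p⁻¹ - δ) / t ≤ deriv (sigmaFn pp φ) t / sigmaFn pp φ t ∧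
        deriv (sigmaFn pp φ) t / sigmaFn pp φ t ≤ (r / n - p⁻¹ + δ) / t) ∧
      (∀ j t, 0 < t → DifferentiableAt ℝ (δfun j) t ∧
        (β j * rr j - δ) / ((rr j + δ) * t) ≤ deriv (δfun j) t / δfun j t ∧
        deriv (δfun j) t / δfun j t ≤ (β j * rr j + δ) / ((rr j - δ) * t)) := by
  have : Nonempty (Fin n) := ⟨⟨0, hn⟩⟩
  have hβsum := sum_beta_eq_one hn hrr hrdef hpdef hβdef
  have hβ1 : ∀ j, β j ≤ 1 := fun j =>
    hβsum ▸ Finset.single_le_sum (fun i _ => (hβ i).le) (Finset.mem_univ j)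
  have hδβ : ∀ j, 2 * δ ≤ β j * rr j := fun j => by
    linarith [ciInf_le (Finite.bddBelow_range fun i => β i * rr i) j]
  obtain ⟨D, σ, hDpos, hprod, hbal, hDC1, hσC1, hσ', hD'⟩ :=
    exists_balanced (pp := pp) (c := r / n - p⁻¹) hβ1 hβsum hδ.le
      (fun j => by linarith [hδβ j]) (fun j => by nlinarith [hδβ j, hβ1 j, hrr j])
      (fun j => by rw [hβdef, mul_comm, mul_inv_cancel_left₀ (hrr j).ne']; ring)
      hφpos hφC1 hφup hφdown
  have hsig : EqOn (sigmaFn pp φ) σ (Ioi 0) := fun t ht =>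
    sigmaFn_eq_of_forall_eq hφmono (hDpos · t) (hprod t ht) (hbal · t ht)
  have hsigD : ∀ j t, 0 < t → sigmaFn pp φ t = t ^ (-(pp j)⁻¹) * φ j (D j t) :=
    fun j t ht => (hsig ht).trans (hbal j t ht).symm
  refine ⟨fun t ht => ⟨(D · t), (hDpos · t), hprod t ht, ?_⟩,
    fun t ht j => ⟨D j t, ⟨hDpos j t, hsigD j t ht⟩, ?_⟩,
    D, fun j t _ => hDpos j t, hDC1, hσC1.congr hsig, hprod, hsigD, fun t ht => ?_, hD'⟩
  · simp only [← hsigD _ t ht, ciSup_const]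
  · rintro d ⟨hd, h⟩
    exact (hφmono j).injOn hd (hDpos j t)
      (mul_left_cancel₀ (rpow_pos_of_pos ht _).ne' (h.symm.trans (hsigD j t ht)))
  · have e := hsig.eventuallyEq_of_mem (Ioi_mem_nhds ht)
    rw [e.deriv_eq, hsig ht, e.differentiableAt_iff]
    exact hσ' t ht

/-- attainment and uniqueness of the equilibrating parameters, and the
logarithmic-derivative bounds for `σ` and the `δ_j`. -/
theorem stmt17 (n : ℕ) (hn : 0 < n) (rr pp : Fin n → ℝ) (θθ : Fin n → ℝ≥0∞)
    (hrr : ∀ j, 0 < rr j) (hpp : ∀ j, 1 ≤ pp j) (hθθ : ∀ j, 1 ≤ θθ j)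
    (r p : ℝ) (θ : ℝ≥0∞) (β : Fin n → ℝ)
    (hrdef : r = (n : ℝ) / ∑ j, (rr j)⁻¹)
    (hpdef : p = ((n : ℝ) / r) / ∑ j, (pp j * rr j)⁻¹)
    (hθdef : θ = (ENNReal.ofReal ((r / n) * ∑ j, ((θθ j)⁻¹).toReal / rr j))⁻¹)
    (hβdef : ∀ j, β j = (rr j)⁻¹ * (r / n + (pp j)⁻¹ - p⁻¹))
    (hβ : ∀ j, 0 < β j)
    (δ : ℝ) (hδ : 0 < δ) (hδ' : δ ≤ (1 / 2) * ⨅ j, β j * rr j)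
    (φ : Fin n → ℝ → ℝ)
    (hφpos : ∀ j t, 0 < t → 0 < φ j t)
    (hφmono : ∀ j, StrictMonoOn (φ j) (Set.Ioi 0))
    (hφC1 : ∀ j, ContDiffOn ℝ 1 (φ j) (Set.Ioi 0))
    (hφup : ∀ j, MonotoneOn (fun t => φ j t * t ^ (-(rr j) + δ)) (Set.Ioi 0))
    (hφdown : ∀ j, AntitoneOn (fun t => φ j t * t ^ (-(rr j) - δ)) (Set.Ioi 0)) :
    (∀ t, 0 < t → ∃ d : Fin n → ℝ, (∀ j, 0 < d j) ∧ (∏ j, d j) = t ∧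
      sigmaFn pp φ t = ⨆ j, t ^ (-(pp j)⁻¹) * φ j (d j)) ∧
    (∀ t, 0 < t → ∀ j, ∃! dj : ℝ, 0 < dj ∧ sigmaFn pp φ t = t ^ (-(pp j)⁻¹) * φ j dj) ∧
    ∃ δfun : Fin n → ℝ → ℝ,
      (∀ j t, 0 < t → 0 < δfun j t) ∧
      (∀ j, ContDiffOn ℝ 1 (δfun j) (Set.Ioi 0)) ∧
      ContDiffOn ℝ 1 (sigmaFn pp φ) (Set.Ioi 0) ∧
      (∀ t, 0 < t → (∏ j, δfun j t) = t) ∧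
      (∀ j t, 0 < t → sigmaFn pp φ t = t ^ (-(pp j)⁻¹) * φ j (δfun j t)) ∧
      (∀ t, 0 < t → DifferentiableAt ℝ (sigmaFn pp φ) t ∧
        (r / n - p⁻¹ - δ) / t ≤ deriv (sigmaFn pp φ) t / sigmaFn pp φ t ∧
        deriv (sigmaFn pp φ) t / sigmaFn pp φ t ≤ (r / n - p⁻¹ + δ) / t) ∧
      (∀ j t, 0 < t → DifferentiableAt ℝ (δfun j) t ∧
        (β j * rr j - δ) / ((rr j + δ) * t) ≤ deriv (δfun j) t / δfun j t ∧
        deriv (δfun j) t / δfun j t ≤ (β j * rr j + δ) / ((rr j - δ) * t)) :=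
  stmt17_general n hn rr pp hrr r p β hrdef hpdef hβdef hβ δ hδ hδ' φ hφpos hφmono hφC1 hφup hφdown

end
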